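/- arXiv:1101.1176 — 2 statements merged into one kernel-verified Lean document; each statement's English description precedes it below -/
import Mathlib

section
/- Let $(a_t)_{t \geq 1}$ be a sequence of nonnegative reals such that $a_t \leq c_1 t^{-d/2}$ for all $t \geq 1$ (with $c_1 > 0$, $d \geq 3$) and $\sum_{t \geq 1} a_t = \eta < 1$. Then there exist constants $\beta < 1$ and $C_1 > 0$ such that for every $\ell \geq 1$ and every $t \geq 1$, $\sum_{t_1 + \cdots + t_\ell = t} a_{t_1} \cdots a_{t_\ell} \leq C_1 \beta^\ell t^{-d/2}$, where the sum is over $\ell$-tuples of positive integers summing to $t$. -/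
/-!
Write `r = d / 2`. Split off the first part `u` of a composition of `t` into `ℓ + 1` positive
parts. Either `u ≥ ε t`, so that `a u ≤ c₁ ε ^ (-r) t ^ (-r)` while the other `ℓ` parts contribute
at most their total mass `η ^ ℓ`; or the other parts sum to more than `(1 - ε) t`, so that the
bound for `ℓ` parts applies at the cost of a factor `(1 - ε) ^ (-r)` while `u` contributes at most
`η`. Pick `η < δ ^ 2 < 1` and `ε` with `(1 - ε) ^ r = δ`: the bound `C δ ^ ℓ t ^ (-r)` then passes
from `ℓ` to `ℓ + 1` as soon as `C (δ - η / δ) ≥ c₁ ε ^ (-r)`.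
-/

open Finset

noncomputable def convPow (a : ℕ → ℝ) (ℓ t : ℕ) : ℝ :=
  ∑ f ∈ (Nat.antidiagonalTuple ℓ t).filter (fun f => ∀ i, 1 ≤ f i), ∏ i, a (f i)

section

variable {a : ℕ → ℝ}

theorem convPow_nonneg (ha : ∀ n, 0 ≤ a n) (ℓ t : ℕ) : 0 ≤ convPow a ℓ t :=
  sum_nonneg fun _ _ => prod_nonneg fun _ _ => ha _

theorem convPow_one {t : ℕ} (ht : 1 ≤ t) : convPow a 1 t = a t := by
  simp [convPow, filter_singleton, ht]

theorem convPow_succ (ℓ t : ℕ) :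
    convPow a (ℓ + 1) t =
      ∑ p ∈ (antidiagonal t).filter (fun p => 1 ≤ p.1), a p.1 * convPow a ℓ p.2 := by
  simp only [convPow, mul_sum]
  rw [sum_sigma']
  refine (sum_nbij' (fun x => Fin.cons x.1.1 x.2)
    (fun f => ⟨(f 0, ∑ i : Fin ℓ, f i.succ), Fin.tail f⟩) ?_ ?_ ?_ ?_ ?_).symm
  · rintro ⟨⟨u, v⟩, g⟩
    simp only [mem_sigma, mem_filter, HasAntidiagonal.mem_antidiagonal,
      Nat.mem_antidiagonalTuple, Fin.sum_univ_succ, Fin.forall_fin_succ, Fin.cons_zero,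
      Fin.cons_succ]
    grind
  · intro f
    simp only [mem_sigma, mem_filter, HasAntidiagonal.mem_antidiagonal,
      Nat.mem_antidiagonalTuple, Fin.sum_univ_succ, Fin.forall_fin_succ, Fin.tail]
    grind
  · rintro ⟨⟨u, v⟩, g⟩
    simp only [mem_sigma, mem_filter, HasAntidiagonal.mem_antidiagonal, Nat.mem_antidiagonalTuple]
    rintro ⟨-, rfl, -⟩
    simp
  · exact fun f _ => Fin.cons_self_tail f
  · intro x _
    simp [Fin.prod_univ_succ]

theorem sum_range_convPow_le_pow (ha : ∀ n, 0 ≤ a n) (ℓ N : ℕ) :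
    ∑ s ∈ range N, convPow a ℓ s ≤ (∑ n ∈ range N, a n) ^ ℓ := by
  have hdisj : (range N : Set ℕ).PairwiseDisjoint
      fun s => (Nat.antidiagonalTuple ℓ s).filter (fun f => ∀ i, 1 ≤ f i) := by
    intro s _ s' _ hss
    simp only [Function.onFun, disjoint_left, mem_filter, Nat.mem_antidiagonalTuple]
    rintro f ⟨rfl, -⟩ ⟨h, -⟩
    exact hss h
  simp only [convPow]
  rw [← sum_biUnion hdisj, ← Fin.prod_const, prod_univ_sum]
  refine sum_le_sum_of_subset_of_nonneg ?_ fun f _ _ => prod_nonneg fun i _ => ha _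
  intro f hf
  simp only [mem_biUnion, mem_filter, Nat.mem_antidiagonalTuple, mem_range] at hf
  obtain ⟨s, hsN, rfl, -⟩ := hf
  simp only [Fintype.mem_piFinset, mem_range]
  exact fun i => (single_le_sum (fun j _ => Nat.zero_le (f j)) (mem_univ i)).trans_lt hsN

theorem convPow_succ_le {c₁ η M K r ε : ℝ} {ℓ t : ℕ} (ha : ∀ n, 0 ≤ a n) (hc₁ : 0 ≤ c₁)
    (hdecay : ∀ n, 1 ≤ n → a n ≤ c₁ * (n : ℝ) ^ (-r)) (hη : ∀ N, ∑ n ∈ range N, a n ≤ η)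
    (hM : ∀ N, ∑ s ∈ range N, convPow a ℓ s ≤ M) (hK₀ : 0 ≤ K)
    (hK : ∀ s, 1 ≤ s → convPow a ℓ s ≤ K * (s : ℝ) ^ (-r)) (hr : 0 ≤ r) (hε₀ : 0 < ε)
    (hε₁ : ε < 1) (ht : 1 ≤ t) :
    convPow a (ℓ + 1) t ≤ (c₁ * ε ^ (-r) * M + η * (1 - ε) ^ (-r) * K) * (t : ℝ) ^ (-r) := by
  have ht₀ : (0 : ℝ) < t := by exact_mod_cast ht
  set X := c₁ * (ε * t) ^ (-r)
  set Y := K * ((1 - ε) * t) ^ (-r)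
  have hX : 0 ≤ X := by positivity
  have hY : 0 ≤ Y := mul_nonneg hK₀ (Real.rpow_nonneg (mul_nonneg (by linarith) ht₀.le) _)
  have hsplit : ∀ p ∈ antidiagonal t, 1 ≤ p.1 →
      a p.1 * convPow a ℓ p.2 ≤ X * convPow a ℓ p.2 + Y * a p.1 := by
    rintro ⟨u, v⟩ huv hu
    have huv : (u : ℝ) + v = t := by exact_mod_cast HasAntidiagonal.mem_antidiagonal.mp huv
    have hconv := convPow_nonneg ha ℓ v
    rcases le_or_gt (ε * t) u with hlarge | hsmall
    · have : a u ≤ X := (hdecay u hu).trans <| mul_le_mul_of_nonneg_left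
        (Real.rpow_le_rpow_of_nonpos (by positivity) hlarge (by linarith)) hc₁
      nlinarith [ha u]
    · have hv : (1 - ε) * t < v := by linarith
      have hv₁ : 1 ≤ v := by
        have : (0 : ℝ) < v := lt_of_le_of_lt (by nlinarith) hv
        exact_mod_cast this
      have : convPow a ℓ v ≤ Y := (hK v hv₁).trans <| mul_le_mul_of_nonneg_left
        (Real.rpow_le_rpow_of_nonpos (by nlinarith) hv.le (by linarith)) hK₀
      nlinarith [ha u]
  have hfst : ∑ p ∈ antidiagonal t, a p.1 ≤ η := by
    rw [Nat.sum_antidiagonal_eq_sum_range_succ_mk]; exact hη _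
  have hsnd : ∑ p ∈ antidiagonal t, convPow a ℓ p.2 ≤ M := by
    rw [← Nat.sum_antidiagonal_swap]
    simp only [Prod.snd_swap]
    rw [Nat.sum_antidiagonal_eq_sum_range_succ_mk]; exact hM _
  calc convPow a (ℓ + 1) t
      ≤ ∑ p ∈ (antidiagonal t).filter (fun p => 1 ≤ p.1),
          (X * convPow a ℓ p.2 + Y * a p.1) := by
        rw [convPow_succ]
        exact sum_le_sum fun p hp => hsplit p (mem_filter.mp hp).1 (mem_filter.mp hp).2
    _ ≤ ∑ p ∈ antidiagonal t, (X * convPow a ℓ p.2 + Y * a p.1) :=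
        sum_le_sum_of_subset_of_nonneg (filter_subset _ _)
          fun p _ _ => add_nonneg (mul_nonneg hX (convPow_nonneg ha ℓ _)) (mul_nonneg hY (ha _))
    _ = X * ∑ p ∈ antidiagonal t, convPow a ℓ p.2 + Y * ∑ p ∈ antidiagonal t, a p.1 := by
        rw [sum_add_distrib, mul_sum, mul_sum]
    _ ≤ X * M + Y * η := by gcongr
    _ = _ := by
        simp only [X, Y, Real.mul_rpow hε₀.le ht₀.le, Real.mul_rpow (sub_pos.2 hε₁).le ht₀.le]
        ring

theorem exists_convPow_le_geometric {c₁ η r : ℝ} (ha : ∀ n, 0 ≤ a n) (hc₁ : 0 < c₁)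
    (hdecay : ∀ n, 1 ≤ n → a n ≤ c₁ * (n : ℝ) ^ (-r)) (hη : ∀ N, ∑ n ∈ range N, a n ≤ η)
    (hη₁ : η < 1) (hr : 0 < r) :
    ∃ β < (1 : ℝ), ∃ C > (0 : ℝ), ∀ ℓ, 1 ≤ ℓ → ∀ t, 1 ≤ t →
      convPow a ℓ t ≤ C * β ^ ℓ * (t : ℝ) ^ (-r) := by
  have hη₀ : 0 ≤ η := (ha 0).trans (by simpa using hη 1)
  obtain ⟨δ, hδ₀, hδ₁, hηδ, hηδ'⟩ : ∃ δ, 0 < δ ∧ δ < 1 ∧ η ≤ δ ∧ η / δ < δ := by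
    refine ⟨(1 + η) / 2, by linarith, by linarith, by linarith, ?_⟩
    rw [div_lt_iff₀ (by linarith)]
    nlinarith
  set ε := 1 - δ ^ r⁻¹
  have hε₀ : 0 < ε := sub_pos.2 (Real.rpow_lt_one hδ₀.le hδ₁ (inv_pos.2 hr))
  have hε₁ : ε < 1 := sub_lt_self _ (Real.rpow_pos_of_pos hδ₀ _)
  have hεδ : (1 - ε) ^ (-r) = δ⁻¹ := by
    rw [sub_sub_cancel, Real.rpow_neg (Real.rpow_nonneg hδ₀.le _), ← Real.rpow_mul hδ₀.le,
      inv_mul_cancel₀ hr.ne', Real.rpow_one]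
  set A := c₁ * ε ^ (-r)
  set C := (c₁ + A) / (δ - η / δ)
  have hC : C * (δ - η / δ) = c₁ + A := div_mul_cancel₀ _ (sub_pos.2 hηδ').ne'
  have hA : 0 ≤ A := by positivity
  refine ⟨δ, hδ₁, C, div_pos (by positivity) (sub_pos.2 hηδ'), fun ℓ hℓ => ?_⟩
  induction ℓ, hℓ using Nat.le_induction with
  | base =>
    intro t ht
    rw [convPow_one ht, pow_one]
    refine (hdecay t ht).trans (mul_le_mul_of_nonneg_right ?_ (by positivity))
    nlinarith [div_nonneg hη₀ hδ₀.le]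
  | succ ℓ _ ih =>
    intro t ht
    have hmass : ∀ N, ∑ s ∈ range N, convPow a ℓ s ≤ η ^ ℓ := fun N =>
      (sum_range_convPow_le_pow ha ℓ N).trans
        (pow_le_pow_left₀ (sum_nonneg fun n _ => ha n) (hη N) ℓ)
    refine (convPow_succ_le ha hc₁.le hdecay hη hmass (by positivity) ih hr.le hε₀ hε₁ ht).trans ?_
    rw [hεδ]
    gcongr ?_ * _
    have : η ^ ℓ ≤ δ ^ ℓ := pow_le_pow_left₀ hη₀ hηδ ℓ
    calc A * η ^ ℓ + η * δ⁻¹ * (C * δ ^ ℓ) ≤ (A + η / δ * C) * δ ^ ℓ := by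
          rw [div_eq_mul_inv]; nlinarith
      _ ≤ C * δ ^ (ℓ + 1) := by rw [pow_succ]; nlinarith [pow_pos hδ₀ ℓ]

end

theorem convolution_power_polynomial_decay
    (d : ℕ) (hd : 3 ≤ d) (a : ℕ → ℝ) (c₁ η : ℝ) (hc₁ : 0 < c₁)
    (ha0 : ∀ t, 0 ≤ a t)
    (hbound : ∀ t : ℕ, 1 ≤ t → a t ≤ c₁ * (t : ℝ) ^ (-(d : ℝ)/2))
    (hsum : Summable a) (hη : ∑' t, a t = η) (hη1 : η < 1) :
    ∃ β < (1:ℝ), ∃ C₁ > (0:ℝ), ∀ ℓ : ℕ, 1 ≤ ℓ → ∀ t : ℕ, 1 ≤ t →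
      ∑ f ∈ (Finset.Nat.antidiagonalTuple ℓ t).filter (fun f => ∀ i, 1 ≤ f i),
          ∏ i, a (f i)
        ≤ C₁ * β ^ ℓ * (t : ℝ) ^ (-(d : ℝ)/2) := by
  have hr : 0 < (d : ℝ) / 2 := div_pos (Nat.cast_pos.2 (by omega)) two_pos
  have hpartial : ∀ N, ∑ n ∈ range N, a n ≤ η := fun N =>
    hη ▸ hsum.sum_le_tsum _ fun n _ => ha0 n
  simp only [neg_div] at hbound ⊢
  exact exists_convPow_le_geometric ha0 hc₁ hbound hpartial hη1 hr
end

section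
/- Let $(\mathcal{N}_t)_{t \geq 0}$ be a nonnegative martingale with $\mathcal{N}_0 = 1$ on a filtered probability space, and let $\mathcal{N}_\infty$ be its almost sure limit. Suppose that for every $s \geq 0$ one has the branching decomposition $\mathcal{N}_\infty = \sum_{i} w_i^{(s)} \mathcal{N}_\infty^{(s,i)}$ almost surely, where $w_i^{(s)} \geq 0$ are $\mathcal{F}_s$-measurable with $\sum_i w_i^{(s)} = \mathcal{N}_s$, and conditionally on $\mathcal{F}_s$ each $\mathcal{N}_\infty^{(s,i)}$ is distributed as $\mathcal{N}_\infty$ with $E[\mathcal{N}_\infty^{(s,i)} \mid \mathcal{F}_s] = \ell := E[\mathcal{N}_\infty]$. Then $\ell \in \{0, 1\}$. -/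
open MeasureTheory Filter ProbabilityTheory
open scoped ENNReal Topology

/-!
Conditioning the branching decomposition on `ℱ s` gives `E[N∞ | ℱ s] = ℓ N_s`. Letting `s → ∞`,
Lévy's upward theorem turns this into `E[N∞ | ℱ∞] = ℓ N∞`, and taking expectations gives
`ℓ = ℓ²`.
-/

lemma ENNReal.tsum_ofReal_ne_top_iff_summable {ι : Type*} {f : ι → ℝ} (hf : ∀ i, 0 ≤ f i) :
    ∑' i, ENNReal.ofReal (f i) ≠ ∞ ↔ Summable f :=
  ⟨fun h => (ENNReal.summable_toReal h).congr fun i => ENNReal.toReal_ofReal (hf i),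
    Summable.tsum_ofReal_ne_top⟩

lemma ProbabilityTheory.identDistrib_of_map_eq {Ω β : Type*} [MeasurableSpace Ω]
    [MeasurableSpace β] {μ : Measure Ω} [NeZero μ] {f g : Ω → β} (hg : AEMeasurable g μ)
    (h : μ.map f = μ.map g) : IdentDistrib f g μ μ where
  aemeasurable_fst := .of_map_ne_zero (h ▸ (Measure.map_ne_zero_iff hg).2 (NeZero.ne μ))
  aemeasurable_snd := hg
  map_eq := h

namespace MeasureTheory

variable {Ω : Type*} {m m0 : MeasurableSpace Ω} {μ : Measure Ω}

section PullOut

variable [IsFiniteMeasure μ] (hm : m ≤ m0)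
include hm

/-- The density `X` has `m`-conditional expectation `c`, so on `m` it only rescales `μ` by `c`. -/
theorem lintegral_mul_ofReal_eq_of_condExp_eq_const {X : Ω → ℝ} {c : ℝ} (hX : Integrable X μ)
    (hX0 : 0 ≤ᵐ[μ] X) (hXc : μ[X | m] =ᵐ[μ] fun _ => c) {g : Ω → ℝ≥0∞} (hg : Measurable[m] g) :
    ∫⁻ ω, g ω * ENNReal.ofReal (X ω) ∂μ = ENNReal.ofReal c * ∫⁻ ω, g ω ∂μ := by
  have htrim : (μ.withDensity fun ω => ENNReal.ofReal (X ω)).trim hm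
      = ENNReal.ofReal c • μ.trim hm := by
    refine @Measure.ext _ m _ _ fun B hB => ?_
    have hB' : MeasurableSet B := hm B hB
    rw [trim_measurableSet_eq hm hB, Measure.smul_apply, trim_measurableSet_eq hm hB,
      withDensity_apply _ hB', ← ofReal_integral_eq_lintegral_ofReal hX.restrict
        (ae_restrict_of_ae hX0), ← setIntegral_condExp hm hX hB,
      setIntegral_congr_ae hB' (hXc.mono fun ω hω _ => hω), setIntegral_const, smul_eq_mul,
      ENNReal.ofReal_mul measureReal_nonneg, ofReal_measureReal (measure_ne_top μ B), mul_comm,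
      smul_eq_mul]
  calc ∫⁻ ω, g ω * ENNReal.ofReal (X ω) ∂μ
      = ∫⁻ ω, g ω ∂μ.withDensity fun ω => ENNReal.ofReal (X ω) := by
        rw [lintegral_withDensity_eq_lintegral_mul₀ hX.aemeasurable.ennreal_ofReal
          (hg.mono hm le_rfl).aemeasurable]
        simp only [Pi.mul_apply, mul_comm]
    _ = ∫⁻ ω, g ω ∂(ENNReal.ofReal c • μ.trim hm) := by rw [← htrim, lintegral_trim hm hg]
    _ = ENNReal.ofReal c * ∫⁻ ω, g ω ∂μ := by
        rw [lintegral_smul_measure, lintegral_trim hm hg, smul_eq_mul]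

variable {w X : ℕ → Ω → ℝ} {c : ℝ} (hw0 : ∀ i ω, 0 ≤ w i ω) (hw : ∀ i, Measurable[m] (w i))
  (hX : ∀ i, Integrable (X i) μ) (hX0 : ∀ i, 0 ≤ᵐ[μ] X i)
  (hXc : ∀ i, μ[X i | m] =ᵐ[μ] fun _ => c)
include hw0 hw hX hX0 hXc

theorem setLIntegral_tsum_ofReal_mul_eq {A : Set Ω} (hA : MeasurableSet[m] A) :
    ∫⁻ ω in A, ∑' i, ENNReal.ofReal (w i ω * X i ω) ∂μ
      = ENNReal.ofReal c * ∫⁻ ω in A, ∑' i, ENNReal.ofReal (w i ω) ∂μ := by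
  simp_rw [fun i ω => ENNReal.ofReal_mul (q := X i ω) (hw0 i ω)]
  have hwA : ∀ i, Measurable[m] (A.indicator fun ω => ENNReal.ofReal (w i ω)) :=
    fun i => (ENNReal.measurable_ofReal.comp (hw i)).indicator hA
  have hwae : ∀ i, AEMeasurable (fun ω => ENNReal.ofReal (w i ω)) (μ.restrict A) :=
    fun i => ((hw i).mono hm le_rfl).ennreal_ofReal.aemeasurable
  rw [lintegral_tsum fun i => by
      exact (hwae i).mul (hX i).aemeasurable.ennreal_ofReal.restrict,
    lintegral_tsum hwae, ← ENNReal.tsum_mul_left]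
  refine tsum_congr fun i => ?_
  simp_rw [← lintegral_indicator (hm A hA), Set.indicator_mul_left]
  exact lintegral_mul_ofReal_eq_of_condExp_eq_const hm (hX i) (hX0 i) (hXc i) (hwA i)

end PullOut

section Branching

variable [IsFiniteMeasure μ] (hm : m ≤ m0) {w Z' : ℕ → Ω → ℝ} {Y Z : Ω → ℝ} {c : ℝ}
  (hw0 : ∀ i ω, 0 ≤ w i ω) (hw : ∀ i, Measurable[m] (w i))
  (hwY : ∀ᵐ ω ∂μ, ∑' i, w i ω = Y ω) (hZ : ∀ᵐ ω ∂μ, Z ω = ∑' i, w i ω * Z' i ω)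
  (hZ'int : ∀ i, Integrable (Z' i) μ) (hZ'0 : ∀ i, 0 ≤ᵐ[μ] Z' i)
  (hZ'c : ∀ i, μ[Z' i | m] =ᵐ[μ] fun _ => c) (hY : Integrable Y μ)
  (hZY : ∀ B, MeasurableSet[m] B →
    ∫⁻ ω in B, ENNReal.ofReal (Z ω) ∂μ ≤ ∫⁻ ω in B, ENNReal.ofReal (Y ω) ∂μ)
include hm hw0 hw hwY hZ hZ'int hZ'0 hZ'c hY hZY

/-- Off the `m`-measurable set `S` where the weights are summable, `Y = 0` (the junk value of
`tsum`), and the bound `hZY` forces `Z = 0` there as well. -/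
theorem setLIntegral_ofReal_eq_mul_of_branching {A : Set Ω} (hA : MeasurableSet[m] A) :
    ∫⁻ ω in A, ENNReal.ofReal (Z ω) ∂μ
      = ENNReal.ofReal c * ∫⁻ ω in A, ENNReal.ofReal (Y ω) ∂μ := by
  set G : Ω → ℝ≥0∞ := fun ω => ∑' i, ENNReal.ofReal (w i ω)
  set F : Ω → ℝ≥0∞ := fun ω => ∑' i, ENNReal.ofReal (w i ω * Z' i ω)
  have hFG : ∀ B, MeasurableSet[m] B →
      ∫⁻ ω in B, F ω ∂μ = ENNReal.ofReal c * ∫⁻ ω in B, G ω ∂μ :=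
    fun B hB => setLIntegral_tsum_ofReal_mul_eq hm hw0 hw hZ'int hZ'0 hZ'c hB
  set S : Set Ω := {ω | G ω ≠ ∞}
  have hGm : Measurable[m] G := by
    let _ : MeasurableSpace Ω := m
    exact Measurable.tsum fun i => ENNReal.measurable_ofReal.comp (hw i)
  have hS : MeasurableSet[m] S := hGm (measurableSet_singleton ∞).compl
  have hS' : MeasurableSet S := hm S hS
  have hGY : ∀ᵐ ω ∂μ, ω ∈ S → G ω = ENNReal.ofReal (Y ω) := by
    filter_upwards [hwY] with ω hω hωS
    rw [← hω, ENNReal.ofReal_tsum_of_nonneg (hw0 · ω)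
      ((ENNReal.tsum_ofReal_ne_top_iff_summable (hw0 · ω)).1 hωS)]
  have hY0 : ∀ᵐ ω ∂μ, ω ∈ A \ S → ENNReal.ofReal (Y ω) = 0 := by
    filter_upwards [hwY] with ω hω hωS
    rw [← hω, tsum_eq_zero_of_not_summable
      (mt (ENNReal.tsum_ofReal_ne_top_iff_summable (hw0 · ω)).2 hωS.2), ENNReal.ofReal_zero]
  have hFZ : ∀ᵐ ω ∂μ, ω ∈ S → F ω = ENNReal.ofReal (Z ω) := by
    have hFS : ∫⁻ ω in S, F ω ∂μ ≠ ∞ := by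
      rw [hFG S hS, setLIntegral_congr_fun_ae hS' hGY]
      exact ENNReal.mul_ne_top ENNReal.ofReal_ne_top hY.restrict.lintegral_lt_top.ne
    have hFae : AEMeasurable F μ := AEMeasurable.tsum fun i =>
      (((hw i).mono hm le_rfl).aemeasurable.mul (hZ'int i).aemeasurable).ennreal_ofReal
    filter_upwards [(ae_restrict_iff' hS').1 (ae_lt_top' hFae.restrict hFS), hZ,
      ae_all_iff.2 hZ'0] with ω hlt hω h0 hωS
    have hnn : ∀ i, 0 ≤ w i ω * Z' i ω := fun i => mul_nonneg (hw0 i ω) (h0 i)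
    rw [hω, ENNReal.ofReal_tsum_of_nonneg hnn
      ((ENNReal.tsum_ofReal_ne_top_iff_summable hnn).1 (hlt hωS).ne)]
  have hAY : ∫⁻ ω in A \ S, ENNReal.ofReal (Y ω) ∂μ = 0 :=
    (setLIntegral_congr_fun_ae ((hm A hA).diff hS') hY0).trans lintegral_zero
  have hAZ : ∫⁻ ω in A \ S, ENNReal.ofReal (Z ω) ∂μ = 0 :=
    le_antisymm ((hZY _ (hA.diff hS)).trans hAY.le) bot_le
  calc ∫⁻ ω in A, ENNReal.ofReal (Z ω) ∂μ = ∫⁻ ω in A ∩ S, ENNReal.ofReal (Z ω) ∂μ := by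
        rw [← lintegral_inter_add_sdiff _ A hS', hAZ, add_zero]
    _ = ∫⁻ ω in A ∩ S, F ω ∂μ :=
        setLIntegral_congr_fun_ae ((hm A hA).inter hS') (hFZ.mono fun ω h hω => (h hω.2).symm)
    _ = ENNReal.ofReal c * ∫⁻ ω in A ∩ S, ENNReal.ofReal (Y ω) ∂μ := by
        rw [hFG _ (hA.inter hS), setLIntegral_congr_fun_ae ((hm A hA).inter hS')
          (hGY.mono fun ω h hω => h hω.2)]
    _ = ENNReal.ofReal c * ∫⁻ ω in A, ENNReal.ofReal (Y ω) ∂μ := by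
        rw [← lintegral_inter_add_sdiff _ A hS', hAY, add_zero]

theorem condExp_ae_eq_const_mul_of_branching (hYm : StronglyMeasurable[m] Y)
    (hZint : Integrable Z μ) (hZ0 : 0 ≤ᵐ[μ] Z) (hc : 0 ≤ c) :
    μ[Z | m] =ᵐ[μ] fun ω => c * Y ω := by
  have hY0 : 0 ≤ᵐ[μ] Y := hwY.mono fun ω hω => hω ▸ tsum_nonneg (hw0 · ω)
  refine (ae_eq_condExp_of_forall_setIntegral_eq hm hZint
    (fun _ _ _ => (hY.const_mul c).integrableOn) (fun A hA _ => ?_)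
    (stronglyMeasurable_const.mul hYm).aestronglyMeasurable).symm
  rw [integral_const_mul]
  refine (ENNReal.ofReal_eq_ofReal_iff
    (mul_nonneg hc (integral_nonneg_of_ae (ae_restrict_of_ae hY0)))
    (integral_nonneg_of_ae (ae_restrict_of_ae hZ0))).1 ?_
  rw [ENNReal.ofReal_mul hc, ofReal_integral_eq_lintegral_ofReal hY.restrict
      (ae_restrict_of_ae hY0), ofReal_integral_eq_lintegral_ofReal hZint.restrict
      (ae_restrict_of_ae hZ0)]
  exact (setLIntegral_ofReal_eq_mul_of_branching hm hw0 hw hwY hZ hZ'int hZ'0 hZ'c hY hZY hA).symm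

end Branching

section Limit

variable [IsFiniteMeasure μ] {ℱ : Filtration ℕ m0} {N : ℕ → Ω → ℝ} {X : Ω → ℝ}

/-- Fatou's lemma, using that `∫_B N n` is constant for `n ≥ s`. -/
theorem Martingale.setLIntegral_ofReal_le_of_tendsto (hN : Martingale N ℱ μ)
    (hN0 : ∀ n, 0 ≤ᵐ[μ] N n) (hlim : ∀ᵐ ω ∂μ, Tendsto (fun n => N n ω) atTop (𝓝 (X ω)))
    {s : ℕ} {B : Set Ω} (hB : MeasurableSet[ℱ s] B) :
    ∫⁻ ω in B, ENNReal.ofReal (X ω) ∂μ ≤ ∫⁻ ω in B, ENNReal.ofReal (N s ω) ∂μ := by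
  have hconst : ∀ n ≥ s,
      ∫⁻ ω in B, ENNReal.ofReal (N n ω) ∂μ = ∫⁻ ω in B, ENNReal.ofReal (N s ω) ∂μ := by
    intro n hn
    rw [← ofReal_integral_eq_lintegral_ofReal (hN.integrable n).restrict
        (ae_restrict_of_ae (hN0 n)),
      ← ofReal_integral_eq_lintegral_ofReal (hN.integrable s).restrict
        (ae_restrict_of_ae (hN0 s)), hN.setIntegral_eq hn hB]
  calc ∫⁻ ω in B, ENNReal.ofReal (X ω) ∂μ
      = ∫⁻ ω in B, liminf (fun n => ENNReal.ofReal (N n ω)) atTop ∂μ :=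
        lintegral_congr_ae (ae_restrict_of_ae (hlim.mono fun ω h =>
          ((ENNReal.continuous_ofReal.tendsto _).comp h).liminf_eq.symm))
    _ ≤ liminf (fun n => ∫⁻ ω in B, ENNReal.ofReal (N n ω) ∂μ) atTop :=
        lintegral_liminf_le' fun n => (hN.integrable n).aemeasurable.ennreal_ofReal.restrict
    _ = ∫⁻ ω in B, ENNReal.ofReal (N s ω) ∂μ :=
        (tendsto_const_nhds.congr'
          (eventually_atTop.2 ⟨s, fun n hn => (hconst n hn).symm⟩)).liminf_eq

theorem condExp_iSup_ae_eq_const_mul_of_tendsto {c : ℝ}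
    (hlim : ∀ᵐ ω ∂μ, Tendsto (fun n => N n ω) atTop (𝓝 (X ω)))
    (hce : ∀ n, μ[X | ℱ n] =ᵐ[μ] fun ω => c * N n ω) :
    μ[X | ⨆ n, ℱ n] =ᵐ[μ] fun ω => c * X ω := by
  filter_upwards [tendsto_ae_condExp (ℱ := ℱ) X, hlim, ae_all_iff.2 hce] with ω hlevy hN hce
  exact tendsto_nhds_unique (hlevy.congr fun n => hce n) (hN.const_mul c)

end Limit

end MeasureTheory

theorem expectation_limit_martingale_zero_or_one_general
    {Ω : Type*} {m0 : MeasurableSpace Ω} {μ : Measure Ω} [IsProbabilityMeasure μ]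
    (ℱ : Filtration ℕ m0) (N : ℕ → Ω → ℝ) (Ninf : Ω → ℝ)
    (hmart : Martingale N ℱ μ) (hpos : ∀ t ω, 0 ≤ N t ω)
    (hlim : ∀ᵐ ω ∂μ, Tendsto (fun t => N t ω) atTop (nhds (Ninf ω)))
    (hNinf_int : Integrable Ninf μ)
    (ℓ : ℝ) (hℓ : ℓ = ∫ ω, Ninf ω ∂μ)
    (w : ℕ → ℕ → Ω → ℝ) (Ninf' : ℕ → ℕ → Ω → ℝ)
    (hw0 : ∀ s i ω, 0 ≤ w s i ω)
    (hwmeas : ∀ s i, StronglyMeasurable[ℱ s] (w s i))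
    (hwsum : ∀ s, ∀ᵐ ω ∂μ, ∑' i, w s i ω = N s ω)
    (hdecomp : ∀ s, ∀ᵐ ω ∂μ, Ninf ω = ∑' i, w s i ω * Ninf' s i ω)
    (hdist : ∀ s i, μ.map (Ninf' s i) = μ.map Ninf)
    (hcond : ∀ s i, μ[Ninf' s i | ℱ s] =ᵐ[μ] fun _ => ℓ) :
    ℓ = 0 ∨ ℓ = 1 := by
  have hN_nonneg : ∀ t, 0 ≤ᵐ[μ] N t := fun t => ae_of_all _ (hpos t)
  have hNinf_nonneg : 0 ≤ᵐ[μ] Ninf := hlim.mono fun ω h => ge_of_tendsto' h fun t => hpos t ω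
  have hℓ_nonneg : 0 ≤ ℓ := hℓ ▸ integral_nonneg_of_ae hNinf_nonneg
  have hlaw : ∀ s i, IdentDistrib (Ninf' s i) Ninf μ μ :=
    fun s i => identDistrib_of_map_eq hNinf_int.aemeasurable (hdist s i)
  have hce : ∀ s, μ[Ninf | ℱ s] =ᵐ[μ] fun ω => ℓ * N s ω := fun s =>
    condExp_ae_eq_const_mul_of_branching (ℱ.le s) (hw0 s) (fun i => (hwmeas s i).measurable)
      (hwsum s) (hdecomp s) (fun i => (hlaw s i).integrable_iff.2 hNinf_int)
      (fun i => (hlaw s i).symm.ae_snd measurableSet_Ici hNinf_nonneg) (hcond s)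
      (hmart.integrable s) (fun B hB => hmart.setLIntegral_ofReal_le_of_tendsto hN_nonneg hlim hB)
      (hmart.stronglyAdapted s) hNinf_int hNinf_nonneg hℓ_nonneg
  have hfixed := condExp_iSup_ae_eq_const_mul_of_tendsto hlim hce
  have hidem : IsIdempotentElem ℓ := calc
    ℓ * ℓ = ∫ ω, ℓ * Ninf ω ∂μ := by rw [integral_const_mul, ← hℓ]
    _ = ∫ ω, (μ[Ninf | ⨆ n, ℱ n]) ω ∂μ := integral_congr_ae hfixed.symm
    _ = ℓ := by rw [integral_condExp (iSup_le ℱ.le), hℓ]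
  exact IsIdempotentElem.iff_eq_zero_or_one.1 hidem

theorem expectation_limit_martingale_zero_or_one
    {Ω : Type*} {m0 : MeasurableSpace Ω} {μ : Measure Ω} [IsProbabilityMeasure μ]
    (ℱ : Filtration ℕ m0) (N : ℕ → Ω → ℝ) (Ninf : Ω → ℝ)
    (hmart : Martingale N ℱ μ) (hpos : ∀ t ω, 0 ≤ N t ω) (hN0 : ∀ ω, N 0 ω = 1)
    (hlim : ∀ᵐ ω ∂μ, Tendsto (fun t => N t ω) atTop (nhds (Ninf ω)))
    (hNinf_int : Integrable Ninf μ)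
    (ℓ : ℝ) (hℓ : ℓ = ∫ ω, Ninf ω ∂μ)
    (w : ℕ → ℕ → Ω → ℝ) (Ninf' : ℕ → ℕ → Ω → ℝ)
    (hw0 : ∀ s i ω, 0 ≤ w s i ω)
    (hwmeas : ∀ s i, StronglyMeasurable[ℱ s] (w s i))
    (hwsum : ∀ s, ∀ᵐ ω ∂μ, ∑' i, w s i ω = N s ω)
    (hdecomp : ∀ s, ∀ᵐ ω ∂μ, Ninf ω = ∑' i, w s i ω * Ninf' s i ω)
    (hdist : ∀ s i, μ.map (Ninf' s i) = μ.map Ninf)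
    (hcond : ∀ s i, μ[Ninf' s i | ℱ s] =ᵐ[μ] fun _ => ℓ) :
    ℓ = 0 ∨ ℓ = 1 :=
  expectation_limit_martingale_zero_or_one_general ℱ N Ninf hmart hpos hlim hNinf_int ℓ hℓ w Ninf'
    hw0 hwmeas hwsum hdecomp hdist hcond
end
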